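/- Arbitrarily many sequential detections for the generalized-GHZ mixed family: For every integer N ≥ 3, every α ∈ (0,1), every p_1 > 0, p_2, p_3 ≥ 0 with p_1+p_2+p_3 = 1, and every natural number n, there exist sharpness parameters λ_1, …, λ_n ∈ (0,1) such that, setting ρ_1 = p_1|ψ⟩⟨ψ| + p_2|0…0⟩⟨0…0| + p_3|1…1⟩⟨1…1| with |ψ⟩ = √α|0…0⟩ + √(1−α)|1…1⟩, and ρ_k = (id ⊗ Φ_{λ_{k−1}})(ρ_{k−1}) for 2 ≤ k ≤ n (the map acting on the N-th qubit), one has Tr(W^{λ_k} ρ_k) < 0 for every k = 1, …, n. -/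

import Mathlib

/-!
Every state of the sequence stays in the real span of the matrix units on `|0…0⟩`, `|1…1⟩` and
their images `X_N|0…0⟩`, `X_N|1…1⟩` under σ_x on the last qubit. On this family `Φ_λ` moves a
fraction `t = (1 - √(1-λ²))/4 ≤ λ²/4` of the population to the flipped pair and halves the total
coherence, while `Tr(W^λ ρ) = 2·leak − 2λ·coherence`, where the leak is the population of the
flipped pair. With a constant sharpness `ε`, after `j` steps the leak is at most `jε²/4` and the
coherence is `c/2^j` with `c = p₁√(α(1-α)) > 0`; so `ε·n·2ⁿ < c` makes all `n` values negative.
-/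

open Matrix
open scoped ComplexOrder

noncomputable section

/-- The space of operators on `N` qubits: complex `2^N × 2^N` matrices, with the
`N`-fold tensor-product structure made explicit by indexing rows and columns by
functions `Fin N → Fin 2`. -/
abbrev QM (N : ℕ) := Matrix (Fin N → Fin 2) (Fin N → Fin 2) ℂ

/-- The Pauli matrix σ_x. -/
def sigx : Matrix (Fin 2) (Fin 2) ℂ := !![0, 1; 1, 0]

/-- The Pauli matrix σ_z. -/
def sigz : Matrix (Fin 2) (Fin 2) ℂ := !![1, 0; 0, -1]

/-- The tensor (Kronecker) product `f 0 ⊗ f 1 ⊗ ⋯ ⊗ f (N-1)` of single-qubit operators. -/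
def tensorAll (N : ℕ) (f : Fin N → Matrix (Fin 2) (Fin 2) ℂ) : QM N :=
  Matrix.of fun v w => ∏ i, f i (v i) (w i)

/-- The single-qubit operator `M` acting on qubit `m`, tensored with the identity
on all other qubits. -/
def site (N : ℕ) (m : Fin N) (M : Matrix (Fin 2) (Fin 2) ℂ) : QM N :=
  tensorAll N (fun i => if i = m then M else 1)

/-- GHZ stabilizer generator `S_1 = σ_x^(1) σ_x^(2) ⋯ σ_x^(N)`. -/
def ghzS1 (N : ℕ) : QM N := tensorAll N (fun _ => sigx)

/-- GHZ stabilizer generator with σ_z on qubits `m-1` and `m` (0-based `m : Fin N`,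
`m ≠ 0`); it represents the 1-based generator `S_{m+1} = σ_z^{(m)} σ_z^{(m+1)}`. -/
def ghzSz (N : ℕ) (m : Fin N) : QM N :=
  tensorAll N (fun i => if i.val = m.val - 1 ∨ i = m then sigz else 1)

/-- The product `∏_{m=2}^{N} (I + S_m)/2` appearing in the GHZ witness
(the factors pairwise commute, so the list ordering is immaterial). -/
def ghzProd (N : ℕ) : QM N :=
  (((List.finRange N).filter (fun m => m.val ≠ 0)).map
    (fun m => (1/2 : ℂ) • ((1 : QM N) + ghzSz N m))).prod

/-- The GHZ genuine-multipartite-entanglement witness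
`W = 3 I − 2 [ (I + S_1)/2 + ∏_{m=2}^N (I + S_m)/2 ]`. -/
def ghzWitness (N : ℕ) : QM N :=
  (3 : ℂ) • (1 : QM N) -
    (2 : ℂ) • ((1/2 : ℂ) • ((1 : QM N) + ghzS1 N) + ghzProd N)

/-- The modified (unsharp) GHZ witness
`W^λ = 3 I − 2 [ (I + λ S_1)/2 + ∏_{m=2}^N (I + S_m)/2 ]`. -/
def ghzWitnessMod (N : ℕ) (lam : ℝ) : QM N :=
  (3 : ℂ) • (1 : QM N) -
    (2 : ℂ) • ((1/2 : ℂ) • ((1 : QM N) + (lam : ℂ) • ghzS1 N) + ghzProd N)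

/-- The rank-one projector `|ψ⟩⟨ψ|` onto a vector `ψ`. -/
def outer (N : ℕ) (ψ : (Fin N → Fin 2) → ℂ) : QM N :=
  Matrix.vecMulVec ψ (star ψ)

/-- The computational basis vector `|0…0⟩ = |0⟩^{⊗N}`. -/
def allZero (N : ℕ) : (Fin N → Fin 2) → ℂ := fun v => if ∀ i, v i = 0 then 1 else 0

/-- The computational basis vector `|1…1⟩ = |1⟩^{⊗N}`. -/
def allOne (N : ℕ) : (Fin N → Fin 2) → ℂ := fun v => if ∀ i, v i = 1 then 1 else 0

/-- The generalized GHZ state vector `|ψ⟩ = √α |0…0⟩ + √(1−α) |1…1⟩`. -/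
def genGhzVec (N : ℕ) (α : ℝ) : (Fin N → Fin 2) → ℂ := fun v =>
  if ∀ i, v i = 0 then ((Real.sqrt α : ℝ) : ℂ)
  else if ∀ i, v i = 1 then ((Real.sqrt (1 - α) : ℝ) : ℂ) else 0

/-- The mixed state `ρ₁ = p₁|ψ⟩⟨ψ| + p₂|0…0⟩⟨0…0| + p₃|1…1⟩⟨1…1|`. -/
def mixedState (N : ℕ) (α p₁ p₂ p₃ : ℝ) : QM N :=
  (p₁ : ℂ) • outer N (genGhzVec N α) + (p₂ : ℂ) • outer N (allZero N)
    + (p₃ : ℂ) • outer N (allOne N)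

/-- The single-qubit unsharp-measurement channel
`Φ_λ(ρ) = ((2+√(1−λ²))/4)ρ + (1/4)σ_z ρ σ_z + ((1−√(1−λ²))/4)σ_x ρ σ_x`, applied to
qubit `m` of an `N`-qubit operator (and acting as the identity on the other qubits). -/
def phiMap (N : ℕ) (m : Fin N) (lam : ℝ) (ρ : QM N) : QM N :=
  (((2 + Real.sqrt (1 - lam ^ 2)) / 4 : ℝ) : ℂ) • ρ
    + (1/4 : ℂ) • (site N m sigz * ρ * site N m sigz)
    + (((1 - Real.sqrt (1 - lam ^ 2)) / 4 : ℝ) : ℂ) • (site N m sigx * ρ * site N m sigx)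

def flipAt {N : ℕ} (m : Fin N) (v : Fin N → Fin 2) : Fin N → Fin 2 :=
  Function.update v m (v m).rev

lemma flipAt_apply_self {N : ℕ} (m : Fin N) (v : Fin N → Fin 2) : flipAt m v m = (v m).rev := by
  simp [flipAt]

lemma flipAt_apply_of_ne {N : ℕ} {m i : Fin N} (h : i ≠ m) (v : Fin N → Fin 2) :
    flipAt m v i = v i := by
  simp [flipAt, Function.update_of_ne h]

@[simp]
lemma flipAt_flipAt {N : ℕ} (m : Fin N) (v : Fin N → Fin 2) : flipAt m (flipAt m v) = v := by
  funext i
  by_cases h : i = m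
  · subst h
    simp [flipAt_apply_self]
  · simp [flipAt_apply_of_ne h]

lemma rev_comp_flipAt {N : ℕ} (m : Fin N) (v : Fin N → Fin 2) :
    Fin.rev ∘ flipAt m v = flipAt m (Fin.rev ∘ v) := by
  funext i
  by_cases h : i = m
  · subst h
    simp [flipAt_apply_self]
  · simp [flipAt_apply_of_ne h]

lemma rev_comp_zero (N : ℕ) : Fin.rev ∘ (0 : Fin N → Fin 2) = 1 := rfl

lemma rev_ne_self (a : Fin 2) : a.rev ≠ a := by
  fin_cases a <;> decide

def flipAtPerm {N : ℕ} (m : Fin N) : Equiv.Perm (Fin N → Fin 2) :=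
  Function.Involutive.toPerm (flipAt m) (flipAt_flipAt m)

@[simp]
lemma flipAtPerm_apply {N : ℕ} (m : Fin N) (v : Fin N → Fin 2) : flipAtPerm m v = flipAt m v :=
  rfl

@[simp]
lemma flipAtPerm_symm {N : ℕ} (m : Fin N) : (flipAtPerm m).symm = flipAtPerm m :=
  Function.Involutive.toPerm_symm _

def zSign (a : Fin 2) : ℂ := if a = 0 then 1 else -1

lemma zSign_mul_zSign (a b : Fin 2) : zSign a * zSign b = if a = b then 1 else -1 := by
  fin_cases a <;> fin_cases b <;> simp [zSign]

lemma sigz_eq_diagonal : sigz = diagonal zSign := by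
  ext a b
  fin_cases a <;> fin_cases b <;> simp [sigz, zSign]

lemma sigx_apply (a b : Fin 2) : sigx a b = if a.rev = b then 1 else 0 := by
  fin_cases a <;> fin_cases b <;> simp [sigx]

lemma tensorAll_diagonal {N : ℕ} (d : Fin N → Fin 2 → ℂ) :
    tensorAll N (fun i => diagonal (d i)) = diagonal (fun v => ∏ i, d i (v i)) := by
  ext v w
  by_cases h : v = w
  · subst h
    simp [tensorAll]
  · obtain ⟨i, hi⟩ := Function.ne_iff.mp h
    rw [diagonal_apply_ne _ h, tensorAll, of_apply]
    exact Finset.prod_eq_zero (Finset.mem_univ i) (diagonal_apply_ne _ hi)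

lemma site_sigz {N : ℕ} (m : Fin N) : site N m sigz = diagonal (fun v => zSign (v m)) := by
  have h : (fun i => if i = m then sigz else 1) =
      fun i => diagonal (fun a => if i = m then zSign a else 1) := by
    funext i
    split_ifs <;> simp [sigz_eq_diagonal]
  simp [site, h, tensorAll_diagonal]

lemma site_sigx {N : ℕ} (m : Fin N) : site N m sigx = (flipAtPerm m).toPEquiv.toMatrix := by
  ext v w
  have factor (i : Fin N) : (if i = m then sigx else 1) (v i) (w i) =
      if flipAt m v i = w i then 1 else 0 := by
    by_cases h : i = m
    · subst h
      simp [flipAt, sigx_apply]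
    · simp [h, flipAt, one_apply]
  simp only [site, tensorAll, of_apply, factor, Fintype.prod_boole, PEquiv.toMatrix_apply,
    Equiv.toPEquiv_apply, Option.mem_some_iff]
  congr 1
  exact propext funext_iff.symm

lemma site_sigz_conj_single {N : ℕ} (m : Fin N) (u v : Fin N → Fin 2) (c : ℂ) :
    site N m sigz * single u v c * site N m sigz = (zSign (u m) * zSign (v m)) • single u v c := by
  ext x y
  by_cases h : u = x ∧ v = y
  · obtain ⟨rfl, rfl⟩ := h
    simp only [site_sigz, mul_diagonal, mul_single_apply_same, diagonal_apply_eq,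
      Matrix.smul_apply, single_apply_same, smul_eq_mul]
    ring
  · simp [site_sigz, diagonal_mul, mul_diagonal, single_apply_of_ne _ _ _ _ _ h]

lemma site_sigx_mul_mul_site_sigx {N : ℕ} (m : Fin N) (A : QM N) :
    site N m sigx * A * site N m sigx = A.submatrix (flipAtPerm m) (flipAtPerm m) := by
  rw [site_sigx, PEquiv.toMatrix_toPEquiv_mul, PEquiv.mul_toMatrix_toPEquiv, submatrix_submatrix]
  rfl

def pairBlock {n : Type*} [DecidableEq n] (u v : n) (a b c : ℝ) : Matrix n n ℂ :=
  (a : ℂ) • single u u 1 + (b : ℂ) • single v v 1 + (c : ℂ) • (single u v 1 + single v u 1)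

lemma trace_mul_pairBlock {n : Type*} [DecidableEq n] [Fintype n] (A : Matrix n n ℂ)
    (u v : n) (a b c : ℝ) :
    (A * pairBlock u v a b c).trace = a * A u u + b * A v v + c * (A v u + A u v) := by
  simp only [pairBlock, smul_single, smul_eq_mul, mul_one, smul_add, mul_add, trace_add,
    trace_mul_single, MulOpposite.smul_eq_mul_unop, MulOpposite.unop_op]
  ring

lemma pairBlock_add_pairBlock {n : Type*} [DecidableEq n] (u v : n) (a b c a' b' c' : ℝ) :
    pairBlock u v a b c + pairBlock u v a' b' c' =
      pairBlock u v (a + a') (b + b') (c + c') := by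
  simp only [pairBlock]
  push_cast
  module

lemma site_sigz_conj_pairBlock {N : ℕ} {m : Fin N} {u v : Fin N → Fin 2} (huv : u m ≠ v m)
    (a b c : ℝ) :
    site N m sigz * pairBlock u v a b c * site N m sigz = pairBlock u v a b (-c) := by
  have hu : zSign (u m) * zSign (u m) = 1 := by simp [zSign_mul_zSign]
  have hv : zSign (v m) * zSign (v m) = 1 := by simp [zSign_mul_zSign]
  have huv' : zSign (u m) * zSign (v m) = -1 := by simp [zSign_mul_zSign, huv]
  have hvu' : zSign (v m) * zSign (u m) = -1 := by rwa [mul_comm]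
  simp only [pairBlock, mul_add, add_mul, mul_smul_comm, smul_mul_assoc, site_sigz_conj_single,
    hu, hv, huv', hvu']
  push_cast
  module

lemma site_sigx_conj_pairBlock {N : ℕ} (m : Fin N) (u v : Fin N → Fin 2) (a b c : ℝ) :
    site N m sigx * pairBlock u v a b c * site N m sigx =
      pairBlock (flipAt m u) (flipAt m v) a b c := by
  rw [site_sigx_mul_mul_site_sigx]
  simp [pairBlock, submatrix_add]

def flipWeight (lam : ℝ) : ℝ := (1 - √(1 - lam ^ 2)) / 4

lemma flipWeight_nonneg (lam : ℝ) : 0 ≤ flipWeight lam := by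
  have : √(1 - lam ^ 2) ≤ 1 := Real.sqrt_le_one.mpr (by nlinarith)
  unfold flipWeight
  linarith

lemma flipWeight_le_quarter (lam : ℝ) : flipWeight lam ≤ 1 / 4 := by
  have := Real.sqrt_nonneg (1 - lam ^ 2)
  unfold flipWeight
  linarith

lemma flipWeight_le_sq_div_four (lam : ℝ) : flipWeight lam ≤ lam ^ 2 / 4 := by
  have : 1 - lam ^ 2 ≤ √(1 - lam ^ 2) := by
    rcases le_total (1 - lam ^ 2) 0 with h | h
    · exact h.trans (Real.sqrt_nonneg _)
    · calc 1 - lam ^ 2 = √(1 - lam ^ 2) * √(1 - lam ^ 2) := (Real.mul_self_sqrt h).symm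
        _ ≤ √(1 - lam ^ 2) * 1 := by
          gcongr
          exact Real.sqrt_le_one.mpr (by nlinarith)
        _ = _ := mul_one _
  unfold flipWeight
  linarith

lemma phiMap_add {N : ℕ} (m : Fin N) (lam : ℝ) (A B : QM N) :
    phiMap N m lam (A + B) = phiMap N m lam A + phiMap N m lam B := by
  simp only [phiMap, mul_add, add_mul, smul_add]
  abel

lemma phiMap_pairBlock {N : ℕ} {m : Fin N} {u v : Fin N → Fin 2} (huv : u m ≠ v m)
    (lam a b c : ℝ) :
    phiMap N m lam (pairBlock u v a b c) =
      pairBlock u v ((1 - flipWeight lam) * a) ((1 - flipWeight lam) * b)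
          ((1 / 2 - flipWeight lam) * c) +
        pairBlock (flipAt m u) (flipAt m v) (flipWeight lam * a) (flipWeight lam * b)
          (flipWeight lam * c) := by
  rw [phiMap, site_sigz_conj_pairBlock huv, site_sigx_conj_pairBlock]
  simp only [pairBlock, flipWeight]
  push_cast
  module

lemma ghzS1_apply {N : ℕ} (v w : Fin N → Fin 2) :
    ghzS1 N v w = if Fin.rev ∘ v = w then 1 else 0 := by
  simp only [ghzS1, tensorAll, of_apply, sigx_apply, Fintype.prod_boole]
  congr 1
  exact propext funext_iff.symm

lemma ghzS1_apply_self {N : ℕ} [NeZero N] (v : Fin N → Fin 2) : ghzS1 N v v = 0 := by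
  rw [ghzS1_apply, if_neg fun hv => rev_ne_self (v 0) (congrFun hv 0)]

lemma ghzS1_apply_rev {N : ℕ} (v : Fin N → Fin 2) : ghzS1 N v (Fin.rev ∘ v) = 1 := by
  rw [ghzS1_apply, if_pos rfl]

-- Truncated subtraction makes `prevSite 0 = 0`, as in the index condition of `ghzSz`.
def prevSite {N : ℕ} (m : Fin N) : Fin N := ⟨m.val - 1, by omega⟩

lemma prevSite_ne {N : ℕ} {m : Fin N} (hm : m.val ≠ 0) : prevSite m ≠ m := by
  simp only [prevSite, ne_eq, Fin.ext_iff]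
  omega

lemma ghzSz_eq_diagonal {N : ℕ} {m : Fin N} (hm : m.val ≠ 0) :
    ghzSz N m = diagonal fun v => zSign (v (prevSite m)) * zSign (v m) := by
  have hsites : Finset.univ.filter (fun i : Fin N => i.val = m.val - 1 ∨ i = m) =
      {prevSite m, m} := by
    ext i
    simp [prevSite, Fin.ext_iff]
  have hdiag : (fun i : Fin N => if i.val = m.val - 1 ∨ i = m then sigz else 1) =
      fun i => diagonal fun a => if i.val = m.val - 1 ∨ i = m then zSign a else 1 := by
    funext i
    split_ifs <;> simp [sigz_eq_diagonal]
  rw [ghzSz, hdiag, tensorAll_diagonal]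
  congr 1
  funext v
  rw [← Finset.prod_filter, hsites, Finset.prod_pair (prevSite_ne hm)]

lemma ghzProd_eq_diagonal (N : ℕ) :
    ghzProd N = diagonal fun v =>
      (((List.finRange N).filter (fun m => m.val ≠ 0)).map
        fun m => if v (prevSite m) = v m then (1 : ℂ) else 0).prod := by
  have hfactor : ∀ m ∈ (List.finRange N).filter (fun m => m.val ≠ 0),
      (1/2 : ℂ) • ((1 : QM N) + ghzSz N m) =
        diagonalRingHom _ _ fun v => if v (prevSite m) = v m then (1 : ℂ) else 0 := by
    intro m hm
    have hm : m.val ≠ 0 := by simpa using (List.mem_filter.mp hm).2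
    rw [ghzSz_eq_diagonal hm, ← diagonal_one, diagonal_add, ← diagonal_smul]
    congr 1
    funext v
    simp only [one_div, zSign_mul_zSign, Pi.smul_apply, smul_eq_mul]
    split_ifs <;> norm_num
  rw [ghzProd, List.map_congr_left hfactor, ← Function.comp_def (diagonalRingHom _ _),
    ← List.map_map, ← map_list_prod]
  simp [Pi.list_prod_apply, Function.comp_def]

lemma ghzProd_apply_self_eq_one {N : ℕ} {v : Fin N → Fin 2}
    (hv : ∀ m : Fin N, v (prevSite m) = v m) : ghzProd N v v = 1 := by
  rw [ghzProd_eq_diagonal, diagonal_apply_eq]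
  exact List.prod_eq_one (by simp [hv])

lemma ghzProd_apply_self_eq_zero {N : ℕ} {m : Fin N} {v : Fin N → Fin 2} (hm : m.val ≠ 0)
    (hv : v (prevSite m) ≠ v m) : ghzProd N v v = 0 := by
  rw [ghzProd_eq_diagonal, diagonal_apply_eq]
  exact List.prod_eq_zero (List.mem_map.mpr ⟨m, by simp [hm], by simp [hv]⟩)

lemma ghzProd_flipAt_eq_zero {N : ℕ} {m : Fin N} (hm : m.val ≠ 0) {v : Fin N → Fin 2}
    (hv : v (prevSite m) = v m) : ghzProd N (flipAt m v) (flipAt m v) = 0 := by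
  apply ghzProd_apply_self_eq_zero hm
  rw [flipAt_apply_of_ne (prevSite_ne hm), flipAt_apply_self, hv]
  exact (rev_ne_self _).symm

lemma ghzWitnessMod_apply {N : ℕ} (lam : ℝ) (v w : Fin N → Fin 2) :
    ghzWitnessMod N lam v w = 2 * (1 : QM N) v w - lam * ghzS1 N v w - 2 * ghzProd N v w := by
  simp only [ghzWitnessMod, Matrix.sub_apply, Matrix.add_apply, Matrix.smul_apply, smul_eq_mul]
  ring

lemma ghzWitnessMod_apply_self {N : ℕ} [NeZero N] (lam : ℝ) (v : Fin N → Fin 2) :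
    ghzWitnessMod N lam v v = 2 - 2 * ghzProd N v v := by
  simp [ghzWitnessMod_apply, ghzS1_apply_self]

lemma ghzWitnessMod_apply_rev {N : ℕ} [NeZero N] (lam : ℝ) (v : Fin N → Fin 2) :
    ghzWitnessMod N lam v (Fin.rev ∘ v) = -lam := by
  have hne : v ≠ Fin.rev ∘ v := fun h => rev_ne_self (v 0) (congrFun h 0).symm
  rw [ghzWitnessMod_apply, ghzS1_apply_rev, ghzProd_eq_diagonal, one_apply_ne hne,
    diagonal_apply_ne _ hne]
  ring

lemma ghzWitnessMod_rev_apply {N : ℕ} [NeZero N] (lam : ℝ) (v : Fin N → Fin 2) :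
    ghzWitnessMod N lam (Fin.rev ∘ v) v = -lam := by
  simpa [Function.comp_def] using ghzWitnessMod_apply_rev lam (Fin.rev ∘ v)

lemma trace_ghzWitnessMod_mul_pairBlock_rev {N : ℕ} [NeZero N] (lam : ℝ) (v : Fin N → Fin 2)
    (a b c : ℝ) :
    (ghzWitnessMod N lam * pairBlock v (Fin.rev ∘ v) a b c).trace =
      a * (2 - 2 * ghzProd N v v) + b * (2 - 2 * ghzProd N (Fin.rev ∘ v) (Fin.rev ∘ v))
        - 2 * lam * c := by
  rw [trace_mul_pairBlock, ghzWitnessMod_apply_self, ghzWitnessMod_apply_self,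
    ghzWitnessMod_apply_rev, ghzWitnessMod_rev_apply]
  ring

/-- Coefficients of a state in the family spanned by `|0…0⟩`, `|1…1⟩` and their images under
flipping qubit `m` (see `toMatrix`); the family is invariant under `Φ_λ` on qubit `m`. -/
structure GhzCoeffs where
  pop₀ : ℝ
  pop₁ : ℝ
  coh : ℝ
  flipPop₀ : ℝ
  flipPop₁ : ℝ
  flipCoh : ℝ

namespace GhzCoeffs

def toMatrix {N : ℕ} (q : GhzCoeffs) (m : Fin N) : QM N :=
  pairBlock 0 1 q.pop₀ q.pop₁ q.coh +
    pairBlock (flipAt m 0) (flipAt m 1) q.flipPop₀ q.flipPop₁ q.flipCoh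

def step (t : ℝ) (q : GhzCoeffs) : GhzCoeffs where
  pop₀ := (1 - t) * q.pop₀ + t * q.flipPop₀
  pop₁ := (1 - t) * q.pop₁ + t * q.flipPop₁
  coh := (1 / 2 - t) * q.coh + t * q.flipCoh
  flipPop₀ := (1 - t) * q.flipPop₀ + t * q.pop₀
  flipPop₁ := (1 - t) * q.flipPop₁ + t * q.pop₁
  flipCoh := (1 / 2 - t) * q.flipCoh + t * q.coh

def total (q : GhzCoeffs) : ℝ := q.pop₀ + q.pop₁ + q.flipPop₀ + q.flipPop₁

def leak (q : GhzCoeffs) : ℝ := q.flipPop₀ + q.flipPop₁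

def coherence (q : GhzCoeffs) : ℝ := q.coh + q.flipCoh

lemma phiMap_toMatrix {N : ℕ} (m : Fin N) (lam : ℝ) (q : GhzCoeffs) :
    phiMap N m lam (q.toMatrix m) = (q.step (flipWeight lam)).toMatrix m := by
  have h01 : (0 : Fin N → Fin 2) m ≠ (1 : Fin N → Fin 2) m := by simp
  have hflip : flipAt m (0 : Fin N → Fin 2) m ≠ flipAt m 1 m := by simp [flipAt_apply_self]
  rw [toMatrix, phiMap_add, phiMap_pairBlock h01, phiMap_pairBlock hflip, flipAt_flipAt,
    flipAt_flipAt, toMatrix]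
  simp only [step, ← pairBlock_add_pairBlock]
  abel

lemma re_trace_ghzWitnessMod_mul_toMatrix {N : ℕ} {m : Fin N} (hm : m.val ≠ 0) (lam : ℝ)
    (q : GhzCoeffs) :
    ((ghzWitnessMod N lam * q.toMatrix m).trace).re = 2 * q.leak - 2 * lam * q.coherence := by
  have : NeZero N := ⟨m.pos.ne'⟩
  rw [toMatrix, ← rev_comp_zero, ← rev_comp_flipAt, mul_add, trace_add,
    trace_ghzWitnessMod_mul_pairBlock_rev, trace_ghzWitnessMod_mul_pairBlock_rev,
    rev_comp_zero, rev_comp_flipAt, rev_comp_zero,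
    ghzProd_apply_self_eq_one (fun _ => rfl), ghzProd_apply_self_eq_one (fun _ => rfl),
    ghzProd_flipAt_eq_zero hm rfl, ghzProd_flipAt_eq_zero hm rfl]
  convert Complex.ofReal_re (2 * q.leak - 2 * lam * q.coherence) using 2
  push_cast [leak, coherence]
  ring

lemma total_step (t : ℝ) (q : GhzCoeffs) : (q.step t).total = q.total := by
  simp only [step, total]
  ring

lemma coherence_step (t : ℝ) (q : GhzCoeffs) : (q.step t).coherence = q.coherence / 2 := by
  simp only [step, coherence]
  ring

lemma leak_step (t : ℝ) (q : GhzCoeffs) :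
    (q.step t).leak = (1 - 2 * t) * q.leak + t * q.total := by
  simp only [step, leak, total]
  ring

lemma total_iterate_step (t : ℝ) (q : GhzCoeffs) (j : ℕ) :
    ((step t)^[j] q).total = q.total := by
  induction j with
  | zero => rfl
  | succ j ih => rw [Function.iterate_succ_apply', total_step, ih]

lemma coherence_iterate_step (t : ℝ) (q : GhzCoeffs) (j : ℕ) :
    ((step t)^[j] q).coherence = q.coherence / 2 ^ j := by
  induction j with
  | zero => simp
  | succ j ih => rw [Function.iterate_succ_apply', coherence_step, ih, pow_succ, div_div]

lemma leak_iterate_step {t : ℝ} (ht₀ : 0 ≤ t) (ht : t ≤ 1 / 2) {q : GhzCoeffs}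
    (hq : q.total = 1) (hleak : 0 ≤ q.leak) (j : ℕ) :
    0 ≤ ((step t)^[j] q).leak ∧ ((step t)^[j] q).leak ≤ q.leak + j * t := by
  induction j with
  | zero => simp [hleak]
  | succ j ih =>
    rw [Function.iterate_succ_apply', leak_step, total_iterate_step, hq]
    push_cast
    constructor <;> nlinarith [ih.1, ih.2]

end GhzCoeffs

lemma re_trace_ghzWitnessMod_mul_iterate_le {N : ℕ} {m : Fin N} (hm : m.val ≠ 0) (lam : ℝ)
    {q : GhzCoeffs} (hq : q.total = 1) (hleak : q.leak = 0) (j : ℕ) :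
    ((ghzWitnessMod N lam * ((GhzCoeffs.step (flipWeight lam))^[j] q).toMatrix m).trace).re ≤
      j * lam ^ 2 / 2 - 2 * lam * (q.coherence / 2 ^ j) := by
  rw [GhzCoeffs.re_trace_ghzWitnessMod_mul_toMatrix hm, GhzCoeffs.coherence_iterate_step]
  have hj := (GhzCoeffs.leak_iterate_step (flipWeight_nonneg lam)
    ((flipWeight_le_quarter lam).trans (by norm_num)) hq hleak.ge j).2
  have := flipWeight_le_sq_div_four lam
  rw [hleak, zero_add] at hj
  nlinarith [(Nat.cast_nonneg j : (0 : ℝ) ≤ j)]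

lemma re_trace_ghzWitnessMod_mul_iterate_neg {N : ℕ} {m : Fin N} (hm : m.val ≠ 0)
    {q : GhzCoeffs} (hq : q.total = 1) (hleak : q.leak = 0) {ε : ℝ} (hε : 0 < ε) {n : ℕ}
    (hεn : ε * (n * 2 ^ n) < q.coherence) {j : ℕ} (hj : j ≤ n) :
    ((ghzWitnessMod N ε * ((GhzCoeffs.step (flipWeight ε))^[j] q).toMatrix m).trace).re < 0 := by
  refine (re_trace_ghzWitnessMod_mul_iterate_le hm ε hq hleak j).trans_lt ?_
  have hpow : (0 : ℝ) < 2 ^ j := by positivity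
  have hjε : ε * (j * 2 ^ j) < q.coherence := by
    refine lt_of_le_of_lt ?_ hεn
    gcongr
    norm_num
  have hjpow : 0 ≤ ε * (j * 2 ^ j) := by positivity
  rw [sub_neg, mul_div_assoc', lt_div_iff₀ hpow]
  nlinarith [mul_lt_mul_of_pos_left hjε hε]

lemma eq_iterate_of_recurrence {α β : Type*} {f : α → β} {g : α → α} {Φ : β → β}
    (hΦ : ∀ x, Φ (f x) = f (g x)) {ρ : ℕ → β} {x₀ : α} {n : ℕ} (h₁ : ρ 1 = f x₀)
    (hρ : ∀ k, 2 ≤ k → k ≤ n → ρ k = Φ (ρ (k - 1))) :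
    ∀ k, 1 ≤ k → k ≤ n → ρ k = f (g^[k - 1] x₀) := by
  intro k hk₁ hkn
  induction k with
  | zero => omega
  | succ k ih =>
    rcases Nat.eq_zero_or_pos k with rfl | hk
    · exact h₁
    · rw [hρ (k + 1) (by omega) hkn, Nat.add_sub_cancel, ih hk (by omega), hΦ,
        ← Function.iterate_succ_apply' g, Nat.succ_eq_add_one, Nat.sub_add_cancel hk]

lemma genGhzVec_eq (N : ℕ) [NeZero N] (α : ℝ) :
    genGhzVec N α = Pi.single 0 (√α : ℂ) + Pi.single 1 (√(1 - α) : ℂ) := by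
  have h01 : (0 : Fin N → Fin 2) ≠ 1 := fun h => by simpa using congrFun h 0
  funext v
  by_cases h₀ : v = 0
  · subst h₀
    simp [genGhzVec, h01]
  · by_cases h₁ : v = 1
    · subst h₁
      simp [genGhzVec, h01.symm]
    · have h₀' : ¬ ∀ i, v i = 0 := fun h => h₀ (funext h)
      have h₁' : ¬ ∀ i, v i = 1 := fun h => h₁ (funext h)
      simp [genGhzVec, h₀, h₁, h₀', h₁']

lemma allZero_eq_genGhzVec (N : ℕ) [NeZero N] : allZero N = genGhzVec N 1 := by
  funext v
  simp [allZero, genGhzVec]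

lemma allOne_eq_genGhzVec (N : ℕ) [NeZero N] : allOne N = genGhzVec N 0 := by
  funext v
  by_cases h : ∀ i, v i = 0 <;> simp [allOne, genGhzVec, h]

lemma outer_genGhzVec (N : ℕ) [NeZero N] {α : ℝ} (hα₀ : 0 ≤ α) (hα₁ : α ≤ 1) :
    outer N (genGhzVec N α) = pairBlock 0 1 α (1 - α) (√α * √(1 - α)) := by
  have h₀ : (√α : ℂ) * √α = α := by
    rw [← Complex.ofReal_mul, Real.mul_self_sqrt hα₀]
  have h₁ : (√(1 - α) : ℂ) * √(1 - α) = 1 - α := by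
    rw [← Complex.ofReal_mul, Real.mul_self_sqrt (by linarith)]
    push_cast
    ring
  have h01 : (0 : Fin N → Fin 2) ≠ 1 := fun h => by simpa using congrFun h 0
  rw [genGhzVec_eq]
  ext a b
  simp only [outer, vecMulVec_apply, pairBlock, Pi.single_apply, single_apply, Pi.add_apply,
    Pi.star_apply, Matrix.add_apply, Matrix.smul_apply]
  by_cases ha₀ : a = 0 <;> by_cases ha₁ : a = 1 <;> by_cases hb₀ : b = 0 <;>
    by_cases hb₁ : b = 1 <;> simp_all [Complex.conj_ofReal, eq_comm, mul_comm]

def mixedCoeffs (α p₁ p₂ p₃ : ℝ) : GhzCoeffs :=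
  ⟨p₁ * α + p₂, p₁ * (1 - α) + p₃, p₁ * (√α * √(1 - α)), 0, 0, 0⟩

lemma mixedState_eq_toMatrix {N : ℕ} (m : Fin N) {α : ℝ} (hα₀ : 0 ≤ α) (hα₁ : α ≤ 1)
    (p₁ p₂ p₃ : ℝ) : mixedState N α p₁ p₂ p₃ = (mixedCoeffs α p₁ p₂ p₃).toMatrix m := by
  have : NeZero N := ⟨m.pos.ne'⟩
  rw [mixedState, allZero_eq_genGhzVec, allOne_eq_genGhzVec, outer_genGhzVec N hα₀ hα₁,
    outer_genGhzVec N le_rfl zero_le_one, outer_genGhzVec N zero_le_one le_rfl]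
  simp only [mixedCoeffs, GhzCoeffs.toMatrix, pairBlock, Real.sqrt_zero, Real.sqrt_one, sub_zero,
    sub_self]
  push_cast
  module

lemma exists_mem_Ioo_mul_lt {c : ℝ} (hc : 0 < c) {M : ℝ} (hM : 0 ≤ M) :
    ∃ ε ∈ Set.Ioo (0 : ℝ) 1, ε * M < c := by
  refine ⟨min (1 / 2) (c / (M + 1)),
    ⟨by positivity, by linarith [min_le_left (1 / 2 : ℝ) (c / (M + 1))]⟩, ?_⟩
  calc min (1 / 2) (c / (M + 1)) * M ≤ c / (M + 1) * M := by gcongr; exact min_le_right _ _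
    _ < c := by
      rw [div_mul_eq_mul_div, div_lt_iff₀ (by positivity)]
      linarith

/-- arbitrarily many sequential detections for the generalized-GHZ
mixed family. For every integer `N ≥ 3`, every `α ∈ (0,1)`, every `p_1 > 0`,
`p_2, p_3 ≥ 0` with `p_1+p_2+p_3 = 1`, and every natural number `n`, there exist
sharpness parameters `λ_1, …, λ_n ∈ (0,1)` such that, setting
`ρ_1 = p_1|ψ⟩⟨ψ| + p_2|0…0⟩⟨0…0| + p_3|1…1⟩⟨1…1|` with
`|ψ⟩ = √α|0…0⟩ + √(1−α)|1…1⟩`, and `ρ_k = (id ⊗ Φ_{λ_{k−1}})(ρ_{k−1})` for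
`2 ≤ k ≤ n` (the map acting on the `N`-th qubit), one has `Tr(W^{λ_k} ρ_k) < 0` for
every `k = 1, …, n`. -/
theorem mixedState_arbitrarily_many_sequential_detections
    (N : ℕ) (hN : 3 ≤ N) (α : ℝ) (hα : α ∈ Set.Ioo (0 : ℝ) 1)
    (p₁ p₂ p₃ : ℝ) (hp₁ : 0 < p₁)
    (hsum : p₁ + p₂ + p₃ = 1) (n : ℕ) :
    ∃ lam : ℕ → ℝ,
      (∀ k, 1 ≤ k → k ≤ n → lam k ∈ Set.Ioo (0 : ℝ) 1) ∧
      ∀ ρ : ℕ → QM N,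
        ρ 1 = mixedState N α p₁ p₂ p₃ →
        (∀ k, 2 ≤ k → k ≤ n →
          ρ k = phiMap N ⟨N - 1, by omega⟩ (lam (k - 1)) (ρ (k - 1))) →
        ∀ k, 1 ≤ k → k ≤ n → ((ghzWitnessMod N (lam k) * ρ k).trace).re < 0 := by
  obtain ⟨hα₀, hα₁⟩ := hα
  set m : Fin N := ⟨N - 1, by omega⟩
  have hm : m.val ≠ 0 := by simp [m]; omega
  set q₀ := mixedCoeffs α p₁ p₂ p₃
  have hq₀ : q₀.total = 1 := by simp only [q₀, mixedCoeffs, GhzCoeffs.total]; linarith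
  have hcoh : 0 < q₀.coherence := by
    have := Real.sqrt_pos.mpr hα₀
    have := Real.sqrt_pos.mpr (sub_pos.mpr hα₁)
    simp only [q₀, mixedCoeffs, GhzCoeffs.coherence]
    positivity
  obtain ⟨ε, hε, hεn⟩ := exists_mem_Ioo_mul_lt hcoh (by positivity : (0 : ℝ) ≤ n * 2 ^ n)
  refine ⟨fun _ => ε, fun _ _ _ => hε, fun ρ hρ₁ hρ k hk₁ hkn => ?_⟩
  rw [eq_iterate_of_recurrence (GhzCoeffs.phiMap_toMatrix m ε)
    (hρ₁.trans (mixedState_eq_toMatrix m hα₀.le hα₁.le p₁ p₂ p₃)) hρ k hk₁ hkn]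
  exact re_trace_ghzWitnessMod_mul_iterate_neg hm hq₀
    (by simp [q₀, mixedCoeffs, GhzCoeffs.leak]) hε.1 hεn (by omega)
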